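/- arXiv:math/0010297 — 2 statements merged into one kernel-verified Lean document; each statement's English description precedes it below -/
import Mathlib

section
/- Let f : ℝ₋ⁿ → ℝ be an indicator profile and assume in addition that there exists A > 0 such that f(t) ≥ A·max_{1≤k≤n} t_k for all t ∈ ℝ₋ⁿ. Let S = {t ∈ ℝ₋ⁿ : f(t) ≤ −1} and let E be the set of extreme points of the convex set S. Then for every a ∈ ℝ₊ⁿ one has sup_{t∈L} ⟨a,t⟩ = sup_{t∈E} ⟨a,t⟩, where L = {t ∈ ℝ₋ⁿ : f(t) = −1}; consequently Γ_L = Γ_E and Θ_L = Θ_E. (This is the key identity in the proof of Proposition 3 of the paper.) -/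
open Set

/-- The negative orthant `ℝ₋ⁿ = (−∞,0)ⁿ`. -/
def negOrth (n : ℕ) : Set (Fin n → ℝ) := {t | ∀ i, t i < 0}

/-- The standard inner product `⟨a, t⟩ = ∑ aᵢ tᵢ` on `ℝⁿ`. -/
def dotp {n : ℕ} (a t : Fin n → ℝ) : ℝ := ∑ i, a i * t i

/-- An indicator profile: convex, nonpositive, nondecreasing in each variable,
and positively homogeneous on the negative orthant. -/
def IsIndicatorProfile {n : ℕ} (f : (Fin n → ℝ) → ℝ) : Prop :=
  ConvexOn ℝ (negOrth n) f ∧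
  (∀ t ∈ negOrth n, f t ≤ 0) ∧
  (∀ s ∈ negOrth n, ∀ t ∈ negOrth n, (∀ i, s i ≤ t i) → f s ≤ f t) ∧
  (∀ c : ℝ, 0 < c → ∀ t ∈ negOrth n, f (c • t) = c * f t)

/-- The level set `L = {t ∈ ℝ₋ⁿ : f(t) = −1}`. -/
def levelL {n : ℕ} (f : (Fin n → ℝ) → ℝ) : Set (Fin n → ℝ) :=
  {t ∈ negOrth n | f t = -1}

/-- `Γ_F = {a ∈ ℝ₊ⁿ : sup_{t∈F} ⟨a,t⟩ = sup_{t∈L} ⟨a,t⟩ = −1}`. -/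
def GammaSet {n : ℕ} (f : (Fin n → ℝ) → ℝ) (F : Set (Fin n → ℝ)) :
    Set (Fin n → ℝ) :=
  {a | (∀ i, 0 ≤ a i) ∧ sSup ((fun t => dotp a t) '' F) = -1 ∧
    sSup ((fun t => dotp a t) '' levelL f) = -1}

/-- `Θ_F = {λa : 0 ≤ λ ≤ 1, a ∈ Γ_F}`. -/
def ThetaSet {n : ℕ} (f : (Fin n → ℝ) → ℝ) (F : Set (Fin n → ℝ)) :
    Set (Fin n → ℝ) :=
  {x | ∃ l : ℝ, 0 ≤ l ∧ l ≤ 1 ∧ ∃ a ∈ GammaSet f F, x = l • a}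

/-!
Tilting `a ≥ 0` to a strictly positive `b = a + ε` makes the superlevel sets of `⟨b, ·⟩` on
`S = {f ≤ -1}` compact, because `S` is closed (a convex `f` is continuous on the open orthant, and
coercivity keeps `S` away from its boundary) and lies in the negative orthant. The maximisers of
`⟨b, ·⟩` on `S` then form a nonempty compact exposed face, which has an extreme point by
Krein–Milman; such a point is extreme in `S` and nearly maximises `⟨a, ·⟩` for small `ε`.
Finally, by homogeneity a point with `f t < -1` is the midpoint of two distinct points of `S` on
the ray through `t`, so every extreme point of `S` lies on `L`.
-/

section ExtremePoints

variable {E : Type*} [AddCommGroup E] [Module ℝ E]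

theorem extremePoints_sublevel_subset_level {C : Set E} {f : E → ℝ}
    (hC : ∀ c : ℝ, 0 < c → ∀ t ∈ C, c • t ∈ C)
    (hhom : ∀ c : ℝ, 0 < c → ∀ t ∈ C, f (c • t) = c * f t) :
    extremePoints ℝ {t ∈ C | f t ≤ -1} ⊆ {t ∈ C | f t = -1} := by
  rintro t ⟨⟨htC, hft⟩, hext⟩
  refine ⟨htC, hft.antisymm (not_lt.1 fun hlt => ?_)⟩
  set c := (-f t)⁻¹ with hc
  have hc0 : 0 < c := inv_pos.2 (by linarith)
  have hc1 : c < 1 := inv_lt_one_of_one_lt₀ (by linarith)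
  have hfc : f (c • t) = -1 := by
    rw [hhom c hc0 t htC, hc, inv_mul_eq_div, div_neg, div_self (hlt.trans neg_one_lt_zero).ne]
  have hmid : t ∈ openSegment ℝ (c • t) ((2 - c) • t) :=
    ⟨1 / 2, 1 / 2, by norm_num, by norm_num, by norm_num, by
      rw [smul_smul, smul_smul, ← add_smul]; ring_nf; exact one_smul ℝ t⟩
  have hfar : f ((2 - c) • t) ≤ -1 := by
    rw [hhom _ (by linarith) t htC]
    nlinarith
  have hct : c • t = t :=
    hext ⟨hC c hc0 t htC, hfc.le⟩ ⟨hC _ (by linarith) t htC, hfar⟩ hmid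
  rw [hct] at hfc
  linarith

variable [TopologicalSpace E] [T2Space E] [IsTopologicalAddGroup E] [ContinuousSMul ℝ E]
  [LocallyConvexSpace ℝ E]

theorem exists_mem_extremePoints_le_of_isCompact {S : Set E} (l : StrongDual ℝ E) {x₀ : E}
    (hx₀ : x₀ ∈ S) (hK : IsCompact {x ∈ S | l x₀ ≤ l x}) :
    ∃ e ∈ extremePoints ℝ S, l x₀ ≤ l e := by
  set K := {x ∈ S | l x₀ ≤ l x}
  have hface : l.toExposed S = l.toExposed K := by
    ext x
    simp only [ContinuousLinearMap.toExposed, mem_ofPred_eq]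
    constructor
    · rintro ⟨hxS, hmax⟩
      exact ⟨⟨hxS, hmax x₀ hx₀⟩, fun y hy => hmax y hy.1⟩
    · rintro ⟨hxK, hmax⟩
      refine ⟨hxK.1, fun y hyS => ?_⟩
      by_cases hy : l x₀ ≤ l y
      · exact hmax y ⟨hyS, hy⟩
      · exact (not_le.1 hy).le.trans hxK.2
  obtain ⟨x, hxK, hxmax⟩ := hK.exists_isMaxOn ⟨x₀, hx₀, le_rfl⟩ l.continuous.continuousOn
  have hne : (l.toExposed K).Nonempty := ⟨x, hxK, fun y hy => hxmax hy⟩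
  obtain ⟨e, he⟩ := (ContinuousLinearMap.toExposed.isExposed.isCompact hK).extremePoints_nonempty hne
  rw [← hface] at he
  exact ⟨e, ContinuousLinearMap.toExposed.isExposed.isExtreme.extremePoints_subset_extremePoints he,
    he.1.2 x₀ hx₀⟩

end ExtremePoints

theorem csSup_image_eq_of_forall_exists_sub_le {α : Type*} {g : α → ℝ} {E L : Set α}
    (hEL : E ⊆ L) (hbdd : BddAbove (g '' L))
    (happrox : ∀ t ∈ L, ∀ δ > 0, ∃ e ∈ E, g t - δ ≤ g e) :
    sSup (g '' L) = sSup (g '' E) := by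
  rcases L.eq_empty_or_nonempty with rfl | ⟨t₀, ht₀⟩
  · rw [subset_empty_iff.1 hEL]
  obtain ⟨e₀, he₀, -⟩ := happrox t₀ ht₀ 1 one_pos
  refine le_antisymm (csSup_le (Nonempty.image _ ⟨t₀, ht₀⟩) ?_)
    (csSup_le_csSup hbdd ⟨_, e₀, he₀, rfl⟩ (image_mono hEL))
  rintro _ ⟨t, ht, rfl⟩
  refine le_of_forall_sub_le fun δ hδ => ?_
  obtain ⟨e, he, hle⟩ := happrox t ht δ hδ
  exact hle.trans (le_csSup (hbdd.mono (image_mono hEL)) ⟨e, he, rfl⟩)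

section Orthant

variable {n : ℕ}

noncomputable def dotpCLM (b : Fin n → ℝ) : StrongDual ℝ (Fin n → ℝ) :=
  LinearMap.toContinuousLinearMap (dotProductBilin ℝ ℝ b)

@[simp]
lemma dotpCLM_apply (b x : Fin n → ℝ) : dotpCLM b x = dotp b x := rfl

lemma dotp_add_const (a x : Fin n → ℝ) (ε : ℝ) :
    dotp (a + fun _ => ε) x = dotp a x + ε * ∑ i, x i := by
  simp only [dotp, Pi.add_apply, add_mul, Finset.sum_add_distrib, Finset.mul_sum]

lemma dotp_le_mul_of_nonpos {b x : Fin n → ℝ} (hb : ∀ j, 0 ≤ b j) (hx : ∀ j, x j ≤ 0)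
    (i : Fin n) : dotp b x ≤ b i * x i :=
  calc dotp b x ≤ ∑ j ∈ {i}, b j * x j :=
        Finset.sum_le_sum_of_subset_of_nonpos' (Finset.subset_univ _)
          fun j _ _ => mul_nonpos_of_nonneg_of_nonpos (hb j) (hx j)
    _ = b i * x i := Finset.sum_singleton _ _

lemma isCompact_setOf_le_dotp {S : Set (Fin n → ℝ)} (hS : IsClosed S)
    (hS0 : ∀ x ∈ S, ∀ i, x i ≤ 0) {b : Fin n → ℝ} (hb : ∀ i, 0 < b i) (c : ℝ) :
    IsCompact {x ∈ S | c ≤ dotp b x} := by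
  refine (isCompact_Icc (a := fun i => c / b i) (b := 0)).of_isClosed_subset
    (hS.inter (isClosed_le continuous_const (dotpCLM b).continuous))
    fun x hx => ⟨fun i => ?_, hS0 x hx.1⟩
  rw [div_le_iff₀ (hb i), mul_comm]
  exact hx.2.trans (dotp_le_mul_of_nonpos (fun j => (hb j).le) (hS0 x hx.1) i)

lemma smul_mem_negOrth {c : ℝ} (hc : 0 < c) {t : Fin n → ℝ} (ht : t ∈ negOrth n) :
    c • t ∈ negOrth n :=
  fun i => mul_neg_of_pos_of_neg hc (ht i)

lemma isOpen_negOrth : IsOpen (negOrth n) := by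
  have : negOrth n = univ.pi fun _ => Iio 0 := by ext; simp [negOrth]
  exact this ▸ isOpen_set_pi finite_univ fun _ _ => isOpen_Iio

variable {f : (Fin n → ℝ) → ℝ} {A : ℝ}

lemma sublevel_subset_Iic_of_coercive (hA : 0 < A)
    (hcoer : ∀ t ∈ negOrth n, A * (⨆ i, t i) ≤ f t) :
    {t ∈ negOrth n | f t ≤ -1} ⊆ Iic fun _ => -1 / A := by
  rintro t ⟨ht, hft⟩ i
  have hi : A * t i ≤ A * ⨆ j, t j :=
    mul_le_mul_of_nonneg_left (le_ciSup (finite_range t).bddAbove i) hA.le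
  change t i ≤ -1 / A
  rw [le_div_iff₀ hA]
  linarith [hcoer t ht]

lemma isClosed_sublevel_of_coercive (hconv : ConvexOn ℝ (negOrth n) f) (hA : 0 < A)
    (hcoer : ∀ t ∈ negOrth n, A * (⨆ i, t i) ≤ f t) :
    IsClosed {t ∈ negOrth n | f t ≤ -1} := by
  have hbox : Iic (fun _ => -1 / A) ⊆ negOrth n := fun t ht i =>
    (ht i).trans_lt (div_neg_of_neg_of_pos neg_one_lt_zero hA)
  have hS : {t ∈ negOrth n | f t ≤ -1} = Iic (fun _ => -1 / A) ∩ f ⁻¹' Iic (-1) :=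
    Subset.antisymm (fun t ht => ⟨sublevel_subset_Iic_of_coercive hA hcoer ht, ht.2⟩)
      fun t ht => ⟨hbox ht.1, ht.2⟩
  rw [hS]
  exact ((hconv.continuousOn isOpen_negOrth).mono hbox).preimage_isClosed_of_isClosed
    isClosed_Iic isClosed_Iic

theorem exists_mem_extremePoints_sub_le_dotp (hconv : ConvexOn ℝ (negOrth n) f) (hA : 0 < A)
    (hcoer : ∀ t ∈ negOrth n, A * (⨆ i, t i) ≤ f t) {a : Fin n → ℝ} (ha : ∀ i, 0 ≤ a i)
    {t₀ : Fin n → ℝ} (ht₀ : t₀ ∈ {t ∈ negOrth n | f t ≤ -1}) {δ : ℝ} (hδ : 0 < δ) :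
    ∃ e ∈ extremePoints ℝ {t ∈ negOrth n | f t ≤ -1}, dotp a t₀ - δ ≤ dotp a e := by
  have hS0 : ∀ x ∈ {t ∈ negOrth n | f t ≤ -1}, ∀ i, x i ≤ 0 := fun x hx i => (hx.1 i).le
  set σ := ∑ i, t₀ i
  have hσ : σ ≤ 0 := Finset.sum_nonpos fun i _ => hS0 t₀ ht₀ i
  set ε := δ / (1 - σ)
  have hε : 0 < ε := div_pos hδ (by linarith)
  have hεσ : -δ ≤ ε * σ := by
    rw [div_mul_eq_mul_div, le_div_iff₀ (by linarith)]
    nlinarith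
  obtain ⟨e, he, hle⟩ := exists_mem_extremePoints_le_of_isCompact (dotpCLM (a + fun _ => ε)) ht₀
    (isCompact_setOf_le_dotp (isClosed_sublevel_of_coercive hconv hA hcoer) hS0
      (fun i => add_pos_of_nonneg_of_pos (ha i) hε) _)
  refine ⟨e, he, ?_⟩
  have he0 : ε * ∑ i, e i ≤ 0 :=
    mul_nonpos_of_nonneg_of_nonpos hε.le (Finset.sum_nonpos fun i _ => hS0 e he.1 i)
  simp only [dotpCLM_apply, dotp_add_const] at hle
  linarith

end Orthant

theorem sup_levelL_eq_sup_extremePoints_general (n : ℕ)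
    (f : (Fin n → ℝ) → ℝ) (hf : IsIndicatorProfile f)
    (A : ℝ) (hA : 0 < A)
    (hcoer : ∀ t ∈ negOrth n, A * (⨆ i, t i) ≤ f t) :
    (∀ a : Fin n → ℝ, (∀ i, 0 ≤ a i) →
        sSup ((fun t => dotp a t) '' levelL f) =
          sSup ((fun t => dotp a t) ''
            Set.extremePoints ℝ {t ∈ negOrth n | f t ≤ -1})) ∧
    GammaSet f (levelL f)
      = GammaSet f (Set.extremePoints ℝ {t ∈ negOrth n | f t ≤ -1}) ∧
    ThetaSet f (levelL f)
      = ThetaSet f (Set.extremePoints ℝ {t ∈ negOrth n | f t ≤ -1}) := by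
  have hsup : ∀ a : Fin n → ℝ, (∀ i, 0 ≤ a i) →
      sSup ((fun t => dotp a t) '' levelL f) =
        sSup ((fun t => dotp a t) '' extremePoints ℝ {t ∈ negOrth n | f t ≤ -1}) :=
    fun a ha => csSup_image_eq_of_forall_exists_sub_le
      (extremePoints_sublevel_subset_level (fun _ hc _ => smul_mem_negOrth hc) hf.2.2.2)
      ⟨0, by
        rintro _ ⟨t, ht, rfl⟩
        exact Finset.sum_nonpos fun i _ => mul_nonpos_of_nonneg_of_nonpos (ha i) (ht.1 i).le⟩
      fun t ht _ hδ => exists_mem_extremePoints_sub_le_dotp hf.1 hA hcoer ha ⟨ht.1, ht.2.le⟩ hδ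
  have hGamma : GammaSet f (levelL f)
      = GammaSet f (extremePoints ℝ {t ∈ negOrth n | f t ≤ -1}) := by
    ext a
    exact and_congr_right fun ha => by rw [hsup a ha]
  exact ⟨hsup, hGamma, by simp only [ThetaSet, hGamma]⟩

/-- The key identity in the proof of Proposition 3: for a coercive indicator
profile, the supremum of `⟨a,·⟩` over the level set `L` equals its supremum
over the set `E` of extreme points of `S = {f ≤ −1}`; consequently
`Γ_L = Γ_E` and `Θ_L = Θ_E`. -/
theorem sup_levelL_eq_sup_extremePoints (n : ℕ) (hn : 1 ≤ n)
    (f : (Fin n → ℝ) → ℝ) (hf : IsIndicatorProfile f)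
    (A : ℝ) (hA : 0 < A)
    (hcoer : ∀ t ∈ negOrth n, A * (⨆ i, t i) ≤ f t) :
    (∀ a : Fin n → ℝ, (∀ i, 0 ≤ a i) →
        sSup ((fun t => dotp a t) '' levelL f) =
          sSup ((fun t => dotp a t) ''
            Set.extremePoints ℝ {t ∈ negOrth n | f t ≤ -1})) ∧
    GammaSet f (levelL f)
      = GammaSet f (Set.extremePoints ℝ {t ∈ negOrth n | f t ≤ -1}) ∧
    ThetaSet f (levelL f)
      = ThetaSet f (Set.extremePoints ℝ {t ∈ negOrth n | f t ≤ -1}) :=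
  sup_levelL_eq_sup_extremePoints_general n f hf A hA hcoer
end

section
/- Let f : ℝ₋ⁿ → ℝ be an indicator profile and assume in addition that there exists A > 0 such that f(t) ≥ A·max_{1≤k≤n} t_k for all t ∈ ℝ₋ⁿ. Let L = {t ∈ ℝ₋ⁿ : f(t) = −1}, let S = {t ∈ ℝ₋ⁿ : f(t) ≤ −1}, and let E be the set of extreme points of the convex set S. Then for every compact subset F of L ∖ E, the set Θ_F ⊆ ℝ₊ⁿ has Lebesgue measure zero. (This expresses Proposition 3 of the paper: the measure γ₋₁, defined on compact subsets F of L by γ₋₁(F) = Vol(Θ_F), is supported by the set E of extreme points.) -/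
open Set

open MeasureTheory

lemma dotp_smul_left {n : ℕ} (l : ℝ) (a t : Fin n → ℝ) : dotp (l • a) t = l * dotp a t := by
  simp [dotp, Finset.mul_sum, mul_assoc]

lemma dotp_smul_right {n : ℕ} (c : ℝ) (a t : Fin n → ℝ) : dotp a (c • t) = c * dotp a t := by
  simp only [dotp, Finset.mul_sum, Pi.smul_apply, smul_eq_mul]
  exact Finset.sum_congr rfl fun i _ => by ring

lemma dotp_add_right {n : ℕ} (a t u : Fin n → ℝ) : dotp a (t + u) = dotp a t + dotp a u := by
  simp only [dotp, Pi.add_apply, mul_add, Finset.sum_add_distrib]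

lemma dotp_sub_right {n : ℕ} (a t u : Fin n → ℝ) : dotp a (t - u) = dotp a t - dotp a u := by
  simp only [dotp, Pi.sub_apply, mul_sub, Finset.sum_sub_distrib]

lemma dotp_sub_left {n : ℕ} (a b t : Fin n → ℝ) : dotp (a - b) t = dotp a t - dotp b t := by
  simp only [dotp, Pi.sub_apply, sub_mul, Finset.sum_sub_distrib]

lemma dotp_nonpos {n : ℕ} {a t : Fin n → ℝ} (ha : ∀ i, 0 ≤ a i) (ht : t ∈ negOrth n) :
    dotp a t ≤ 0 :=
  Finset.sum_nonpos fun i _ => mul_nonpos_of_nonneg_of_nonpos (ha i) (ht i).le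

lemma dotp_le_neg_one {n : ℕ} (f : (Fin n → ℝ) → ℝ)
    (hhom : ∀ c : ℝ, 0 < c → ∀ t ∈ negOrth n, f (c • t) = c * f t)
    (a : Fin n → ℝ) (ha0 : ∀ i, 0 ≤ a i)
    (hsupL : sSup ((fun t => dotp a t) '' levelL f) = -1)
    (s : Fin n → ℝ) (hs : s ∈ negOrth n) (hfs : f s ≤ -1) : dotp a s ≤ -1 := by
  have hfs0 : f s < 0 := lt_of_le_of_lt hfs (by norm_num)
  set c : ℝ := -(f s)⁻¹ with hc
  have hc0 : 0 < c := by
    have : (f s)⁻¹ < 0 := inv_lt_zero.mpr hfs0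
    simp [hc]; linarith
  have hinv : f s * c = -1 := by rw [hc, mul_neg, mul_inv_cancel₀ (ne_of_lt hfs0)]
  have hc1 : c ≤ 1 := by nlinarith
  have hcs : c • s ∈ negOrth n := fun i => mul_neg_of_pos_of_neg hc0 (hs i)
  have hL : c • s ∈ levelL f := by
    refine ⟨hcs, ?_⟩
    rw [hhom c hc0 s hs]; nlinarith
  have hbdd : BddAbove ((fun t => dotp a t) '' levelL f) := by
    refine ⟨0, ?_⟩
    rintro r ⟨u, hu, rfl⟩
    exact dotp_nonpos ha0 hu.1
  have h1 : dotp a (c • s) ≤ -1 := hsupL ▸ le_csSup hbdd ⟨_, hL, rfl⟩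
  rw [dotp_smul_right] at h1
  by_contra hcon
  push_neg at hcon
  nlinarith [mul_lt_mul_of_pos_left hcon hc0]


set_option maxHeartbeats 1000000 in
/-- Proposition 3: for a coercive indicator profile `f`, if `F` is a compact
subset of `L ∖ E` (where `E` is the set of extreme points of
`S = {t ∈ ℝ₋ⁿ : f(t) ≤ −1}`), then `Θ_F` has Lebesgue measure zero; i.e. the
measure `γ₋₁`, given on compact subsets `F` of `L` by `γ₋₁(F) = Vol(Θ_F)`,
is supported by `E`. -/
theorem volume_theta_eq_zero (n : ℕ) (hn : 1 ≤ n)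
    (f : (Fin n → ℝ) → ℝ) (hf : IsIndicatorProfile f)
    (A : ℝ) (hA : 0 < A)
    (hcoer : ∀ t ∈ negOrth n, A * (⨆ i, t i) ≤ f t)
    (F : Set (Fin n → ℝ)) (hFc : IsCompact F)
    (hF : F ⊆ levelL f \ Set.extremePoints ℝ {t ∈ negOrth n | f t ≤ -1}) :
    volume (ThetaSet f F) = 0 := by
  classical
  by_cases hFne : F.Nonempty
  swap
  · have hTh : ThetaSet f F = ∅ := by
      rw [not_nonempty_iff_eq_empty] at hFne
      subst hFne
      ext x
      simp only [ThetaSet, mem_setOf_eq, mem_empty_iff_false, iff_false]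
      rintro ⟨l, _, _, a, ⟨_, hsupF, _⟩, rfl⟩
      rw [image_empty, Real.sSup_empty] at hsupF
      norm_num at hsupF
    rw [hTh]; simp
  obtain ⟨t₀, ht₀⟩ := hFne
  obtain ⟨R, hR⟩ := hFc.isBounded.subset_closedBall 0
  set C : ℝ := R + 1 with hCdef
  have hR0 : 0 ≤ R := by
    have := hR ht₀; rw [Metric.mem_closedBall] at this
    exact le_trans dist_nonneg this
  have hC0 : 0 < C := by rw [hCdef]; linarith
  set S : Set (Fin n → ℝ) := {t ∈ negOrth n | f t ≤ -1} with hSdef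
  set D : Set (Fin n → ℝ) := S ∩ Metric.closedBall 0 C with hDdef
  have ht₀L : t₀ ∈ levelL f := (hF ht₀).1
  have ht₀D : t₀ ∈ D := by
    refine ⟨⟨ht₀L.1, le_of_eq ht₀L.2⟩, ?_⟩
    rw [Metric.mem_closedBall, dist_zero_right]
    have h1 : ‖t₀‖ ≤ R := by
      have := hR ht₀; rwa [Metric.mem_closedBall, dist_zero_right] at this
    rw [hCdef]; linarith
  have hDne : D.Nonempty := ⟨t₀, ht₀D⟩
  set H : (Fin n → ℝ) → ℝ := fun b => sSup ((fun s => dotp b s) '' D) with hHdef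
  have habs : ∀ (b s : Fin n → ℝ), s ∈ D → |dotp b s| ≤ (n * C) * ‖b‖ := by
    intro b s hs
    have hsC : ∀ i, |s i| ≤ C := by
      intro i
      have h1 : ‖s i‖ ≤ ‖s‖ := norm_le_pi_norm s i
      have h2 : ‖s‖ ≤ C := by
        have := hs.2; rwa [Metric.mem_closedBall, dist_zero_right] at this
      rw [Real.norm_eq_abs] at h1; linarith
    calc |dotp b s| ≤ ∑ i, |b i * s i| := Finset.abs_sum_le_sum_abs _ _
      _ ≤ ∑ _i : Fin n, ‖b‖ * C := by
          refine Finset.sum_le_sum fun i _ => ?_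
          rw [abs_mul]
          have h3 : |b i| ≤ ‖b‖ := by
            have := norm_le_pi_norm b i; rwa [Real.norm_eq_abs] at this
          exact mul_le_mul h3 (hsC i) (abs_nonneg _) (norm_nonneg _)
      _ = (n * C) * ‖b‖ := by
          rw [Finset.sum_const, Finset.card_univ, Fintype.card_fin, nsmul_eq_mul]
          ring
  have hbdd : ∀ b, BddAbove ((fun s => dotp b s) '' D) := by
    intro b
    refine ⟨(n * C) * ‖b‖, ?_⟩
    rintro r ⟨s, hs, rfl⟩
    exact le_trans (le_abs_self _) (habs b s hs)
  have hlipkey : ∀ b b' : Fin n → ℝ, H b - H b' ≤ (n * C) * dist b b' := by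
    intro b b'
    rw [sub_le_iff_le_add]
    refine csSup_le (hDne.image _) ?_
    rintro r ⟨s, hs, rfl⟩
    have h1 : dotp b s = dotp b' s + dotp (b - b') s := by
      rw [dotp_sub_left]; ring
    have h2 : dotp b' s ≤ H b' := le_csSup (hbdd b') ⟨s, hs, rfl⟩
    have h3 : dotp (b - b') s ≤ (n * C) * ‖b - b'‖ :=
      le_trans (le_abs_self _) (habs (b - b') s hs)
    rw [dist_eq_norm]
    simp only
    linarith
  have hnC : (0:ℝ) ≤ (n : ℝ) * C := mul_nonneg (Nat.cast_nonneg n) hC0.le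
  have hlip : LipschitzWith (Real.toNNReal ((n : ℝ) * C)) H := by
    apply LipschitzWith.of_dist_le_mul
    intro b b'
    rw [Real.dist_eq, Real.coe_toNNReal _ hnC, abs_sub_le_iff]
    exact ⟨hlipkey b b', by rw [dist_comm]; exact hlipkey b' b⟩
  have hN : volume {x | ¬ DifferentiableAt ℝ H x} = 0 := by
    have := hlip.ae_differentiableAt (μ := volume)
    rwa [ae_iff] at this
  have h0 : volume ({0} : Set (Fin n → ℝ)) = 0 := by
    have he : ({0} : Set (Fin n → ℝ)) = Set.pi univ (fun _ => ({0} : Set ℝ)) := by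
      ext x; simp [funext_iff]
    rw [he, volume_pi_pi]
    simp [Real.volume_singleton]
    omega
  refine measure_mono_null ?_ (measure_union_null h0 hN)
  rintro x ⟨l, hl0, hl1, a, ⟨ha0, hsupF, hsupL⟩, rfl⟩
  rcases eq_or_lt_of_le hl0 with hl | hl
  · exact Or.inl (by rw [← hl, zero_smul]; exact mem_singleton _)
  right
  simp only [mem_setOf_eq]
  intro hdiff
  -- maximizer on F
  have hcont : Continuous (fun t => dotp a t) := by
    unfold dotp
    exact continuous_finset_sum _ fun i _ => continuous_const.mul (continuous_apply i)
  obtain ⟨t, htF, htmax⟩ := hFc.exists_isMaxOn ⟨t₀, ht₀⟩ hcont.continuousOn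
  have hta : dotp a t = -1 := by
    have h1 : dotp a t ≤ -1 :=
      hsupF ▸ le_csSup (hFc.image hcont).bddAbove ⟨t, htF, rfl⟩
    have h2 : sSup ((fun t => dotp a t) '' F) ≤ dotp a t := by
      refine csSup_le (Nonempty.image _ ⟨t₀, ht₀⟩) ?_
      rintro r ⟨u, hu, rfl⟩
      exact htmax hu
    rw [hsupF] at h2
    linarith
  have htL : t ∈ levelL f := (hF htF).1
  have htS : t ∈ S := ⟨htL.1, le_of_eq htL.2⟩
  have htE : t ∉ Set.extremePoints ℝ S := (hF htF).2
  rw [mem_extremePoints, not_and] at htE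
  have htE' := htE htS
  push_neg at htE'
  obtain ⟨y, hyS, z, hzS, hseg, hne⟩ := htE'
  obtain ⟨α, β, hα, hβ, hαβ, hcomb⟩ := hseg
  have hcombi : ∀ i, α * y i + β * z i = t i := by
    intro i
    have := congrFun hcomb i
    simpa using this
  have hyt : y ≠ t := by
    rintro rfl
    refine hne rfl ?_
    have h1 : β • z = β • y := by
      funext i
      simp only [Pi.smul_apply, smul_eq_mul]
      linear_combination hcombi i - y i * hαβ
    exact smul_right_injective _ (ne_of_gt hβ) h1
  have hzt : z ≠ t := by
    rintro rfl
    have h1 : α • y = α • z := by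
      funext i
      simp only [Pi.smul_apply, smul_eq_mul]
      linear_combination hcombi i - z i * hαβ
    exact hne (smul_right_injective _ (ne_of_gt hα) h1) rfl
  set v : Fin n → ℝ := y - t with hvdef
  have hv : v ≠ 0 := sub_ne_zero.mpr hyt
  have hvnorm : 0 < ‖v‖ := norm_pos_iff.mpr hv
  set s₀ : ℝ := min (min 1 (α / β)) (1 / ‖v‖) with hs₀def
  have hs₀ : 0 < s₀ :=
    lt_min (lt_min one_pos (div_pos hα hβ)) (one_div_pos.mpr hvnorm)
  have hs₀1 : s₀ ≤ 1 := le_trans (min_le_left _ _) (min_le_left _ _)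
  have hs₀αβ : s₀ ≤ α / β := le_trans (min_le_left _ _) (min_le_right _ _)
  have hs₀v : s₀ * ‖v‖ ≤ 1 := by
    have h := min_le_right (min 1 (α / β)) (1 / ‖v‖)
    rw [hs₀def]
    calc s₀ * ‖v‖ ≤ (1 / ‖v‖) * ‖v‖ := by
            exact mul_le_mul_of_nonneg_right h hvnorm.le
      _ = 1 := by field_simp
  set y' : Fin n → ℝ := t + s₀ • v with hy'def
  set z' : Fin n → ℝ := t - s₀ • v with hz'def
  have hSconv : Convex ℝ S := hf.1.convex_le (-1)
  have hy'S : y' ∈ S := by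
    have he : y' = (1 - s₀) • t + s₀ • y := by
      funext i
      simp only [hy'def, hvdef, Pi.add_apply, Pi.smul_apply, Pi.sub_apply, smul_eq_mul]
      ring
    rw [he]
    exact hSconv htS hyS (by linarith) hs₀.le (by ring)
  set μ : ℝ := s₀ * β / α with hμdef
  have hμ0 : 0 ≤ μ := by positivity
  have hμ1 : μ ≤ 1 := by
    rw [hμdef, div_le_one hα]
    rw [le_div_iff₀ hβ] at hs₀αβ
    linarith
  have hz'S : z' ∈ S := by
    have he : z' = (1 - μ) • t + μ • z := by
      funext i
      simp only [hz'def, hvdef, hμdef, Pi.add_apply, Pi.smul_apply, Pi.sub_apply, smul_eq_mul]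
      have hti := hcombi i
      field_simp
      linear_combination s₀ * t i * hαβ - s₀ * hti
    rw [he]
    exact hSconv htS hzS (by linarith) hμ0 (by ring)
  have hballmem : ∀ u : Fin n → ℝ, ‖u - t‖ ≤ 1 → u ∈ Metric.closedBall (0 : Fin n → ℝ) C := by
    intro u hu
    rw [Metric.mem_closedBall, dist_zero_right]
    have h1 : ‖t‖ ≤ R := by
      have := hR htF; rwa [Metric.mem_closedBall, dist_zero_right] at this
    have h2 : ‖u‖ ≤ ‖u - t‖ + ‖t‖ := by
      have h3 := norm_add_le (u - t) t
      rwa [sub_add_cancel] at h3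
    rw [hCdef]; linarith
  have hsv1 : ‖s₀ • v‖ ≤ 1 := by
    rw [norm_smul, Real.norm_eq_abs, abs_of_pos hs₀]; exact hs₀v
  have hy'D : y' ∈ D := by
    refine ⟨hy'S, hballmem _ ?_⟩
    rw [hy'def]; simpa using hsv1
  have hz'D : z' ∈ D := by
    refine ⟨hz'S, hballmem _ ?_⟩
    rw [hz'def]
    have : t - s₀ • v - t = -(s₀ • v) := by abel
    rw [this, norm_neg]; exact hsv1
  have hSle : ∀ s ∈ S, dotp a s ≤ -1 := fun s hs =>
    dotp_le_neg_one f hf.2.2.2 a ha0 hsupL s hs.1 hs.2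
  have hy'dot' : dotp a y' = -1 + s₀ * dotp a v := by
    rw [hy'def, dotp_add_right, dotp_smul_right, hta]
  have hz'dot' : dotp a z' = -1 - s₀ * dotp a v := by
    rw [hz'def, dotp_sub_right, dotp_smul_right, hta]
  have hav : dotp a v = 0 := by
    have h1 := hSle y' hy'S
    have h2 := hSle z' hz'S
    rw [hy'dot'] at h1
    rw [hz'dot'] at h2
    have h3 : s₀ * dotp a v = 0 := by linarith
    rcases mul_eq_zero.mp h3 with h | h
    · exact absurd h (ne_of_gt hs₀)
    · exact h
  have hy'dot : dotp a y' = -1 := by rw [hy'dot', hav]; ring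
  have hz'dot : dotp a z' = -1 := by rw [hz'dot', hav]; ring
  have hy'z' : y' ≠ z' := by
    intro h
    apply hv
    funext i
    have := congrFun h i
    simp only [hy'def, hz'def, Pi.add_apply, Pi.sub_apply, Pi.smul_apply, smul_eq_mul] at this
    have h4 : s₀ * v i = 0 := by linarith
    rcases mul_eq_zero.mp h4 with h5 | h5
    · exact absurd h5 (ne_of_gt hs₀)
    · simpa using h5
  -- the contradiction via differentiability
  have hkey : ∀ w : Fin n → ℝ, w ∈ D → dotp a w = -1 →
      ∀ b, fderiv ℝ H (l • a) b = dotp b w := by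
    intro w hwD hwa
    set ℓ : (Fin n → ℝ) →L[ℝ] ℝ :=
      ∑ i, w i • ContinuousLinearMap.proj (R := ℝ) (φ := fun _ : Fin n => ℝ) i with hℓ
    have hℓapp : ∀ b, ℓ b = dotp b w := by
      intro b
      simp only [hℓ, ContinuousLinearMap.coe_sum', Finset.sum_apply,
        ContinuousLinearMap.smul_apply, ContinuousLinearMap.proj_apply, smul_eq_mul, dotp]
      exact Finset.sum_congr rfl fun i _ => mul_comm _ _
    have hHx : H (l • a) = -l := by
      apply le_antisymm
      · refine csSup_le (hDne.image _) ?_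
        rintro r ⟨s, hs, rfl⟩
        have h1 : dotp a s ≤ -1 := hSle s hs.1
        simp only
        rw [dotp_smul_left]
        nlinarith
      · have h2 : dotp (l • a) w ≤ H (l • a) := le_csSup (hbdd _) ⟨w, hwD, rfl⟩
        rwa [dotp_smul_left, hwa, mul_neg_one] at h2
    have hmin : IsLocalMin (fun b => H b - ℓ b) (l • a) := by
      apply Filter.Eventually.of_forall
      intro b
      simp only
      rw [hℓapp, hℓapp, hHx, dotp_smul_left, hwa]
      have h1 : dotp b w ≤ H b := le_csSup (hbdd b) ⟨w, hwD, rfl⟩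
      linarith
    have hdℓ : DifferentiableAt ℝ (fun b => ℓ b) (l • a) := ℓ.differentiableAt
    have h0' : fderiv ℝ (fun b => H b - ℓ b) (l • a) = 0 := hmin.fderiv_eq_zero
    rw [fderiv_fun_sub hdiff hdℓ] at h0'
    have hℓf : fderiv ℝ (fun b => ℓ b) (l • a) = ℓ := ℓ.fderiv
    rw [hℓf] at h0'
    rw [sub_eq_zero] at h0'
    intro b
    rw [h0', hℓapp]
  have e1 := hkey y' hy'D hy'dot
  have e2 := hkey z' hz'D hz'dot
  apply hy'z'
  funext i
  have e3 : dotp (Pi.single i 1) y' = dotp (Pi.single i 1) z' :=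
    (e1 (Pi.single i 1)).symm.trans (e2 (Pi.single i 1))
  have edot : ∀ u : Fin n → ℝ, dotp (Pi.single i 1) u = u i := by
    intro u
    simp [dotp, Pi.single_apply, Finset.sum_ite_eq', ite_mul]
  rw [edot, edot] at e3
  exact e3
end
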